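/- arXiv:2404.06002 — 4 statements merged into one kernel-verified Lean document; each statement's English description precedes it below -/
import Mathlib

section
/- Let F be a forest on n vertices with cc(F) connected components, and write X_F = Σ_{λ ⊢ n} c_λ st_λ in the star-basis. Then for every integer m > cc(F), the sum of the coefficients c_λ over all partitions λ of n with exactly m parts equals 0. -/
/-!
Specialize `x₀ = ⋯ = x_{q-1} = 1` and all other variables to `0`. Then `X_G` becomes the
number `χ_G(q)` of proper `q`-colorings, `st_λ` becomes `∏ᵢ q (q - 1)^(λᵢ - 1)`, and for a
forest with `E` edges `χ_F(q) qᴱ = qⁿ (q - 1)ᴱ`, since deleting a bridge multiplies the number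
of colorings by `q / (q - 1)`. With `t = q / (q - 1)` the expansion becomes
`∑_λ c_λ t^(ℓ(λ) + E) = tⁿ` for infinitely many `t`, hence an identity of polynomials in `t`.
As `n ≤ cc(F) + E < m + E`, the coefficient of `t^(m + E)` on the right is `0`.
-/

open scoped Classical

namespace CSFPaper

noncomputable section

/-- Chromatic symmetric function: the coefficient of a monomial `d` is the number of
proper colorings `κ : V → ℕ` whose color-count vector is `d`. -/
def csf {V : Type*} [Fintype V] (G : SimpleGraph V) : MvPowerSeries ℕ ℚ :=
  fun d : ℕ →₀ ℕ =>
    (Nat.card {κ : V → ℕ //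
      (∀ u w : V, G.Adj u w → κ u ≠ κ w) ∧
      ∀ i : ℕ, d i = Nat.card {v : V // κ v = i}} : ℚ)

/-- The star graph on `k` vertices: vertex `0` is adjacent to all other vertices. -/
def starGraph (k : ℕ) : SimpleGraph (Fin k) where
  Adj a b := a ≠ b ∧ (a.val = 0 ∨ b.val = 0)
  symm := ⟨fun a b h => ⟨h.1.symm, h.2.symm⟩⟩
  loopless := ⟨fun a h => h.1 rfl⟩

/-- The star-basis element `st_λ`. -/
def stPart {n : ℕ} (p : Nat.Partition n) : MvPowerSeries ℕ ℚ :=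
  (p.parts.map fun k => csf (starGraph k)).prod

/-- The parts of a multiset of naturals, in nonincreasing order. -/
def descSort (m : Multiset ℕ) : List ℕ := (m.sort (· ≤ ·)).reverse

/-- Lexicographic (strict) order on partitions presented as multisets. -/
def msLexLT (a b : Multiset ℕ) : Prop := List.Lex (· < ·) (descSort a) (descSort b)

def msLexLE (a b : Multiset ℕ) : Prop := a = b ∨ msLexLT a b

/-- `p` is the leading partition of the expansion with coefficients `c`:
it has a nonzero coefficient and is lexicographically smallest such. -/
def IsLeading {n : ℕ} (c : Nat.Partition n → ℚ) (p : Nat.Partition n) : Prop :=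
  c p ≠ 0 ∧ ∀ q : Nat.Partition n, c q ≠ 0 → msLexLE p.parts q.parts

variable {V : Type*}

/-- The set of internal edges: edges whose two endpoints both have degree at least 2. -/
def internalEdges [Fintype V] (G : SimpleGraph V) : Set (Sym2 V) :=
  {e | e ∈ G.edgeSet ∧ ∀ v ∈ e, 2 ≤ G.degree v}

def numInternalEdges [Fintype V] (G : SimpleGraph V) : ℕ := Nat.card (internalEdges G)

/-- The graph obtained from `G` by deleting all internal edges. -/
def lcGraph [Fintype V] (G : SimpleGraph V) : SimpleGraph V := G.deleteEdges (internalEdges G)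

/-- The multiset of orders of the connected components of `G`. -/
def compSizes [Fintype V] (G : SimpleGraph V) : Multiset ℕ :=
  ((Finset.univ : Finset V).image G.connectedComponentMk).val.map
    fun C => Nat.card C.supp

/-- The leaf component partition `λ_LC(F) = λ(F \ I(F))` (as a multiset of component orders). -/
def lcMultiset [Fintype V] (G : SimpleGraph V) : Multiset ℕ := compSizes (lcGraph G)

/-- The order of the leaf component of `G` containing `x`. -/
def leafCompOrder [Fintype V] (G : SimpleGraph V) (x : V) : ℕ :=
  Nat.card ((lcGraph G).connectedComponentMk x).supp

/-- A deep vertex: an internal vertex all of whose neighbors are internal. -/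
def IsDeep [Fintype V] (G : SimpleGraph V) (v : V) : Prop :=
  2 ≤ G.degree v ∧ ∀ u, G.Adj v u → 2 ≤ G.degree u

/-- Dot contraction of the edge `uv`, realized on the same vertex set: the edge is
contracted onto `u`, and `v` becomes the new isolated vertex. -/
def dotContract (G : SimpleGraph V) (u v : V) : SimpleGraph V where
  Adj a b := a ≠ b ∧ a ≠ v ∧ b ≠ v ∧
    (G.Adj a b ∨ (a = u ∧ G.Adj v b) ∨ (b = u ∧ G.Adj a v))
  symm := by
    constructor
    rintro a b ⟨h1, h2, h3, h4⟩
    refine ⟨h1.symm, h3, h2, ?_⟩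
    rcases h4 with h | ⟨rfl, h⟩ | ⟨rfl, h⟩
    · exact Or.inl h.symm
    · exact Or.inr (Or.inr ⟨rfl, h.symm⟩)
    · exact Or.inr (Or.inl ⟨rfl, h.symm⟩)
  loopless := by constructor; rintro a ⟨h, -⟩; exact h rfl

/-- Leaf contraction of the edge `uv`, realized on the same vertex set: the edge is
contracted onto `u`, and `v` becomes the new pendant leaf `ℓ_e` attached to `u`. -/
def leafContract (G : SimpleGraph V) (u v : V) : SimpleGraph V where
  Adj a b := a ≠ b ∧ ((a = u ∧ b = v) ∨ (a = v ∧ b = u) ∨ (dotContract G u v).Adj a b)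
  symm := by
    constructor
    rintro a b ⟨h1, h2⟩
    refine ⟨h1.symm, ?_⟩
    rcases h2 with ⟨rfl, rfl⟩ | ⟨rfl, rfl⟩ | h
    · exact Or.inr (Or.inl ⟨rfl, rfl⟩)
    · exact Or.inl ⟨rfl, rfl⟩
    · exact Or.inr (Or.inr ((dotContract G u v).adj_symm h))
  loopless := by constructor; rintro a ⟨h, -⟩; exact h rfl

lemma prod_map_pow_eq_pow_sum {M : Type*} [CommMonoid M] (x : M) (s : Multiset ℕ) :
    (s.map (x ^ ·)).prod = x ^ s.sum := by
  induction s using Multiset.induction_on with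
  | empty => simp
  | cons a s ih => simp [ih, pow_add]

open MvPowerSeries in
lemma hasSubst_principalSpec (q : ℕ) :
    HasSubst (fun i : ℕ => if i < q then (PowerSeries.X : PowerSeries ℚ) else 0) := by
  refine ⟨fun i => ?_, fun d => (Set.finite_lt_nat q).subset fun i hi => ?_⟩
  · split_ifs <;> simp [PowerSeries.X]
  · by_contra h
    simp [show ¬ i < q from h] at hi

/-- The principal specialization `x₀ = ⋯ = x_{q-1} = s`, `xᵢ = 0` for `i ≥ q`, as a power
series in `s`. -/
def principalSpec (q : ℕ) : MvPowerSeries ℕ ℚ →ₐ[ℚ] PowerSeries ℚ :=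
  MvPowerSeries.substAlgHom (hasSubst_principalSpec q)

lemma finsupp_prod_ite_X_pow (q : ℕ) (d : ℕ →₀ ℕ) :
    (d.prod fun i e => (if i < q then (PowerSeries.X : PowerSeries ℚ) else 0) ^ e) =
      if d.support ⊆ Finset.range q then PowerSeries.X ^ (Finset.range q).sum d else 0 := by
  split_ifs with h
  · rw [← Finset.sum_subset h fun i _ hi => Finsupp.notMem_support_iff.mp hi, Finsupp.prod,
      ← Finset.prod_pow_eq_pow_sum]
    exact Finset.prod_congr rfl fun i hi => by rw [if_pos (Finset.mem_range.mp (h hi))]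
  · obtain ⟨i, hi, hiq⟩ := Finset.not_subset.mp h
    refine Finset.prod_eq_zero hi ?_
    dsimp only
    rw [if_neg (by simpa using hiq), zero_pow (Finsupp.mem_support_iff.mp hi)]

lemma coeff_principalSpec (q N : ℕ) (f : MvPowerSeries ℕ ℚ) :
    PowerSeries.coeff N (principalSpec q f) =
      ∑ d ∈ (Finset.range q).finsuppAntidiag N, MvPowerSeries.coeff d f := by
  have hterm : ∀ d : ℕ →₀ ℕ, MvPowerSeries.coeff d f • PowerSeries.coeff N
      (d.prod fun i e => (if i < q then (PowerSeries.X : PowerSeries ℚ) else 0) ^ e) =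
      if d ∈ (Finset.range q).finsuppAntidiag N then MvPowerSeries.coeff d f else 0 := by
    intro d
    rw [finsupp_prod_ite_X_pow]
    simp only [Finset.mem_finsuppAntidiag]
    split_ifs <;> simp_all [PowerSeries.coeff_X_pow, eq_comm]
  rw [principalSpec, MvPowerSeries.substAlgHom_apply, PowerSeries.coeff,
    MvPowerSeries.coeff_subst (hasSubst_principalSpec q)]
  simp only [PowerSeries.coeff_coeToMvPowerSeries, hterm]
  rw [finsum_eq_sum_of_support_subset _ (s := (Finset.range q).finsuppAntidiag N),
    Finset.sum_ite_mem, Finset.inter_self]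
  exact fun d hd => by_contra fun h => hd (if_neg h)

def numProperColorings (G : SimpleGraph V) (q : ℕ) : ℕ :=
  Nat.card {κ : V → Fin q // ∀ u w, G.Adj u w → κ u ≠ κ w}

section Colorings

variable [Fintype V]

def colorCount (κ : V → ℕ) : ℕ →₀ ℕ := ∑ v, Finsupp.single (κ v) 1

lemma colorCount_apply (κ : V → ℕ) (i : ℕ) : colorCount κ i = Nat.card {v // κ v = i} := by
  rw [Nat.card_eq_fintype_card, Fintype.card_subtype]
  simp [colorCount, Finsupp.single_apply]

lemma colorCount_mem_finsuppAntidiag {q : ℕ} {κ : V → ℕ} (hκ : ∀ v, κ v < q) :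
    colorCount κ ∈ (Finset.range q).finsuppAntidiag (Fintype.card V) := by
  refine Finset.mem_finsuppAntidiag.mpr ⟨?_, fun i hi => ?_⟩
  · simp only [colorCount_apply, Nat.card_eq_fintype_card, Fintype.card_subtype]
    rw [← Finset.card_univ,
      Finset.card_eq_sum_card_fiberwise fun v _ => Finset.mem_range.mpr (hκ v)]
  · obtain ⟨v, rfl⟩ : ∃ v, κ v = i := by
      by_contra! h
      simp_all [colorCount_apply]
    exact Finset.mem_range.mpr (hκ v)

/-- A coloring with color counts `d` only uses colors in the support of `d`. -/
def csfFiberEquiv (G : SimpleGraph V) {q : ℕ} {d : ℕ →₀ ℕ} (hd : d.support ⊆ Finset.range q) :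
    {κ : V → ℕ // (∀ u w, G.Adj u w → κ u ≠ κ w) ∧ ∀ i, d i = Nat.card {v // κ v = i}} ≃
      {κ : {κ : V → Fin q // ∀ u w, G.Adj u w → κ u ≠ κ w} //
        colorCount (fun v => (κ.1 v : ℕ)) = d} where
  toFun κ := ⟨⟨fun v => ⟨κ.1 v, Finset.mem_range.mp <| hd <| Finsupp.mem_support_iff.mpr <| by
      rw [κ.2.2]; exact Nat.card_ne_zero.mpr ⟨⟨⟨v, rfl⟩⟩, inferInstance⟩⟩,
      fun u w huw h => κ.2.1 u w huw (congrArg Fin.val h)⟩,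
    Finsupp.ext fun i => by rw [colorCount_apply, κ.2.2]⟩
  invFun κ := ⟨fun v => κ.1.1 v, fun u w huw h => κ.1.2 u w huw (Fin.val_injective h),
    fun i => (DFunLike.congr_fun κ.2 i).symm.trans (colorCount_apply _ i)⟩
  left_inv _ := rfl
  right_inv _ := rfl

lemma sum_coeff_csf_finsuppAntidiag (G : SimpleGraph V) (q N : ℕ) :
    ∑ d ∈ (Finset.range q).finsuppAntidiag N, MvPowerSeries.coeff d (csf G) =
      if N = Fintype.card V then (numProperColorings G q : ℚ) else 0 := by
  set cnt : {κ : V → Fin q // ∀ u w, G.Adj u w → κ u ≠ κ w} → ℕ →₀ ℕ :=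
    fun κ => colorCount (fun v => (κ.1 v : ℕ))
  have hfiber : ∀ d ∈ (Finset.range q).finsuppAntidiag N,
      MvPowerSeries.coeff d (csf G) = ((Finset.univ.filter fun κ => cnt κ = d).card : ℕ) := by
    intro d hd
    rw [← Fintype.card_subtype, ← Nat.card_eq_fintype_card,
      ← Nat.card_congr (csfFiberEquiv G (Finset.mem_finsuppAntidiag.mp hd).2)]
    rfl
  have hmem : ∀ κ, cnt κ ∈ (Finset.range q).finsuppAntidiag N ↔ N = Fintype.card V := by
    intro κ
    have h := Finset.mem_finsuppAntidiag.mp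
      (colorCount_mem_finsuppAntidiag fun v => (κ.1 v).isLt)
    rw [Finset.mem_finsuppAntidiag, h.1]
    exact ⟨fun h' => h'.1.symm, fun h' => ⟨h'.symm, h.2⟩⟩
  rw [Finset.sum_congr rfl hfiber, ← Nat.cast_sum, Finset.sum_card_fiberwise_eq_card_filter]
  simp only [hmem, Finset.filter_const]
  split_ifs <;> simp [numProperColorings, Nat.card_eq_fintype_card]

lemma principalSpec_csf (G : SimpleGraph V) (q : ℕ) :
    principalSpec q (csf G) =
      PowerSeries.C (numProperColorings G q : ℚ) * PowerSeries.X ^ Fintype.card V := by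
  ext N
  rw [coeff_principalSpec, sum_coeff_csf_finsuppAntidiag, PowerSeries.coeff_C_mul_X_pow]

end Colorings

lemma principalSpec_stPart {n : ℕ} (p : Nat.Partition n) (q : ℕ) :
    principalSpec q (stPart p) =
      PowerSeries.C (p.parts.map fun k => (numProperColorings (starGraph k) q : ℚ)).prod *
        PowerSeries.X ^ n := by
  simp only [stPart, map_multiset_prod, Multiset.map_map, Function.comp_def, principalSpec_csf,
    Fintype.card_fin, Multiset.prod_map_mul]
  rw [prod_map_pow_eq_pow_sum, p.parts_sum]

lemma numProperColorings_eq_sum_of_csf_eq [Fintype V] (G : SimpleGraph V)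
    (c : Nat.Partition (Fintype.card V) → ℚ)
    (hc : csf G = ∑ p : Nat.Partition (Fintype.card V), c p • stPart p) (q : ℕ) :
    (numProperColorings G q : ℚ) = ∑ p : Nat.Partition (Fintype.card V),
      c p * (p.parts.map fun k => (numProperColorings (starGraph k) q : ℚ)).prod := by
  have h := congrArg (fun f => PowerSeries.coeff (Fintype.card V) (principalSpec q f)) hc
  simpa only [principalSpec_csf, map_sum, map_smul, principalSpec_stPart, smul_eq_mul,
    PowerSeries.coeff_C_mul_X_pow, if_true] using h

lemma starGraph_proper_iff {k q : ℕ} (κ : Fin (k + 1) → Fin q) :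
    (∀ u w, (starGraph (k + 1)).Adj u w → κ u ≠ κ w) ↔ ∀ j : Fin k, κ j.succ ≠ κ 0 := by
  refine ⟨fun h j => h _ _ ⟨Fin.succ_ne_zero j, Or.inr rfl⟩, ?_⟩
  rintro h u w ⟨hne, hu | hw⟩
  · obtain rfl : u = 0 := Fin.ext hu
    obtain ⟨j, rfl⟩ := Fin.eq_succ_of_ne_zero hne.symm
    exact (h j).symm
  · obtain rfl : w = 0 := Fin.ext hw
    obtain ⟨j, rfl⟩ := Fin.eq_succ_of_ne_zero hne
    exact h j

/-- The center takes any of the `q` colors, each of the `k` leaves any of the other `q - 1`. -/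
lemma numProperColorings_starGraph_succ (k q : ℕ) :
    numProperColorings (starGraph (k + 1)) q = q * (q - 1) ^ k := by
  let e := (Equiv.subtypeEquivRight starGraph_proper_iff).trans <|
    ((Fin.consEquiv fun _ => Fin q).subtypeEquiv fun x => Iff.rfl).symm.trans <|
    (Equiv.subtypeProdEquivSigmaSubtype fun c (f : Fin k → Fin q) => ∀ j, f j ≠ c).trans <|
    Equiv.sigmaCongrRight fun c => Equiv.subtypePiEquivPi (p := fun _ b => b ≠ c)
  rw [numProperColorings, Nat.card_congr e, Nat.card_eq_fintype_card, Fintype.card_sigma]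
  simp [Fintype.card_subtype_compl]

lemma prod_numProperColorings_starGraph {n : ℕ} (p : Nat.Partition n) {q : ℕ} (hq : 1 ≤ q)
    {t : ℚ} (ht : (q : ℚ) = t * (q - 1)) :
    (p.parts.map fun k => (numProperColorings (starGraph k) q : ℚ)).prod =
      t ^ Multiset.card p.parts * ((q : ℚ) - 1) ^ n := by
  have hk : ∀ k ∈ p.parts, (numProperColorings (starGraph k) q : ℚ) = t * ((q : ℚ) - 1) ^ k := by
    intro k hk
    obtain ⟨k, rfl⟩ := Nat.exists_eq_add_one_of_ne_zero (p.parts_pos hk).ne'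
    rw [numProperColorings_starGraph_succ]
    push_cast [hq]
    linear_combination ((q : ℚ) - 1) ^ k * ht
  rw [Multiset.map_congr rfl hk, Multiset.prod_map_mul, Multiset.map_const',
    Multiset.prod_replicate, prod_map_pow_eq_pow_sum, p.parts_sum]

section Forests

def recolorComponent {q : ℕ} (G : SimpleGraph V) (v : V) (σ : Equiv.Perm (Fin q))
    (κ : V → Fin q) : V → Fin q :=
  fun a => if G.Reachable a v then σ (κ a) else κ a

variable {G : SimpleGraph V} {u v : V}

lemma recolorComponent_proper {q : ℕ} (σ : Equiv.Perm (Fin q)) {κ : V → Fin q}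
    (hκ : ∀ a b, G.Adj a b → κ a ≠ κ b) (a b : V) (hab : G.Adj a b) :
    recolorComponent G v σ κ a ≠ recolorComponent G v σ κ b := by
  unfold recolorComponent
  by_cases hr : G.Reachable a v
  · rw [if_pos hr, if_pos (hab.symm.reachable.trans hr)]
    exact σ.injective.ne (hκ a b hab)
  · rw [if_neg hr, if_neg fun h => hr (hab.reachable.trans h)]
    exact hκ a b hab

lemma recolorComponent_swap_involutive {q : ℕ} (x y : Fin q) :
    Function.Involutive (recolorComponent G v (Equiv.swap x y)) := by
  intro κ
  funext a
  unfold recolorComponent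
  split_ifs <;> simp

lemma recolorComponent_self {q : ℕ} (σ : Equiv.Perm (Fin q)) (κ : V → Fin q) :
    recolorComponent G v σ κ v = σ (κ v) :=
  if_pos (SimpleGraph.Reachable.refl v)

lemma recolorComponent_of_not_reachable {q : ℕ} (h : ¬G.Reachable u v) (σ : Equiv.Perm (Fin q))
    (κ : V → Fin q) : recolorComponent G v σ κ u = κ u :=
  if_neg h

/-- Swapping the colors `κ v` and `κ u` on the component of `v` makes `u` and `v` equally
colored; the color `κ v` that was given up is the extra factor `q`. -/
lemma numProperColorings_eq_mul_of_not_reachable (h : ¬G.Reachable u v) (q : ℕ) :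
    numProperColorings G q =
      q * Nat.card {κ : V → Fin q // (∀ a b, G.Adj a b → κ a ≠ κ b) ∧ κ u = κ v} := by
  let e : {κ : V → Fin q // ∀ a b, G.Adj a b → κ a ≠ κ b} ≃
      Fin q × {κ : V → Fin q // (∀ a b, G.Adj a b → κ a ≠ κ b) ∧ κ u = κ v} :=
    { toFun κ := (κ.1 v, ⟨recolorComponent G v (Equiv.swap (κ.1 v) (κ.1 u)) κ.1,
          recolorComponent_proper _ κ.2, by
            rw [recolorComponent_self, recolorComponent_of_not_reachable h,
              Equiv.swap_apply_left]⟩)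
      invFun x := ⟨recolorComponent G v (Equiv.swap (x.2.1 u) x.1) x.2.1,
        recolorComponent_proper _ x.2.2.1⟩
      left_inv κ := by
        ext1
        simp only [recolorComponent_of_not_reachable h, Equiv.swap_comm (κ.1 u),
          recolorComponent_swap_involutive _ _ κ.1]
      right_inv := by
        rintro ⟨c, κ, hκ, huv⟩
        have hv : recolorComponent G v (Equiv.swap (κ u) c) κ v = c := by
          rw [recolorComponent_self, ← huv, Equiv.swap_apply_left]
        ext1
        · exact hv
        · ext1
          dsimp only
          rw [hv, recolorComponent_of_not_reachable h, Equiv.swap_comm,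
            recolorComponent_swap_involutive] }
  rw [numProperColorings, Nat.card_congr e, Nat.card_prod, Nat.card_eq_fintype_card (α := Fin q),
    Fintype.card_fin]

lemma proper_iff_deleteEdges {q : ℕ} (huv : G.Adj u v) (κ : V → Fin q) :
    (∀ a b, G.Adj a b → κ a ≠ κ b) ↔
      (∀ a b, (G.deleteEdges {s(u, v)}).Adj a b → κ a ≠ κ b) ∧ κ u ≠ κ v := by
  refine ⟨fun h => ⟨fun a b hab => h a b (SimpleGraph.deleteEdges_adj.mp hab).1, h u v huv⟩, ?_⟩
  rintro ⟨h, huv'⟩ a b hab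
  by_cases he : s(a, b) = s(u, v)
  · rcases Sym2.eq_iff.mp he with ⟨rfl, rfl⟩ | ⟨rfl, rfl⟩
    exacts [huv', huv'.symm]
  · exact h a b (SimpleGraph.deleteEdges_adj.mpr ⟨hab, he⟩)

lemma numProperColorings_deleteEdges_eq_add [Fintype V] (huv : G.Adj u v) (q : ℕ) :
    numProperColorings (G.deleteEdges {s(u, v)}) q = numProperColorings G q +
      Nat.card {κ : V → Fin q //
        (∀ a b, (G.deleteEdges {s(u, v)}).Adj a b → κ a ≠ κ b) ∧ κ u = κ v} := by
  simp only [numProperColorings, proper_iff_deleteEdges huv, Nat.card_eq_fintype_card,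
    Fintype.card_subtype, ← Finset.filter_filter]
  rw [← Finset.card_filter_add_card_filter_not (p := fun κ : V → Fin q => κ u ≠ κ v)]
  simp only [not_not]

/-- Deletion–contraction: the colorings of `G \ uv` with `κ u = κ v` are those of the
contraction, and for a bridge they make up a `1 / q` fraction of all colorings of `G \ uv`. -/
lemma mul_numProperColorings_of_isBridge [Fintype V] (huv : G.Adj u v)
    (hb : G.IsBridge s(u, v)) (q : ℕ) :
    q * numProperColorings G q = (q - 1) * numProperColorings (G.deleteEdges {s(u, v)}) q := by
  have hdel := numProperColorings_deleteEdges_eq_add huv q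
  have hmul := numProperColorings_eq_mul_of_not_reachable (SimpleGraph.isBridge_iff.mp hb) q
  have h : q * numProperColorings (G.deleteEdges {s(u, v)}) q =
      q * numProperColorings G q + numProperColorings (G.deleteEdges {s(u, v)}) q := by
    conv_lhs => rw [hdel]
    rw [mul_add, ← hmul]
  rw [Nat.sub_one_mul]
  omega

lemma numProperColorings_bot [Fintype V] (q : ℕ) :
    numProperColorings (⊥ : SimpleGraph V) q = q ^ Fintype.card V := by
  simp [numProperColorings, Nat.card_eq_fintype_card]

lemma numProperColorings_mul_pow_of_isAcyclic [Fintype V] {F : SimpleGraph V}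
    (hF : F.IsAcyclic) (q : ℕ) :
    numProperColorings F q * q ^ Nat.card F.edgeSet =
      q ^ Fintype.card V * (q - 1) ^ Nat.card F.edgeSet := by
  obtain ⟨E, hE⟩ : ∃ E, Nat.card F.edgeSet = E := ⟨_, rfl⟩
  induction E generalizing F with
  | zero =>
    obtain rfl : F = ⊥ := by
      rw [← SimpleGraph.edgeSet_eq_empty, ← Set.ncard_eq_zero (Set.toFinite _),
        ← Nat.card_coe_set_eq, hE]
    simp [numProperColorings_bot]
  | succ E ih =>
    obtain ⟨⟨e, he⟩⟩ : Nonempty F.edgeSet := (Nat.card_pos_iff.mp (hE ▸ E.succ_pos)).1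
    induction e using Sym2.ind with | h u v => ?_
    have hE' : Nat.card (F.deleteEdges {s(u, v)}).edgeSet = E := by
      rw [SimpleGraph.edgeSet_deleteEdges, Nat.card_coe_set_eq,
        Set.ncard_sdiff_singleton_of_mem he, ← Nat.card_coe_set_eq, hE, Nat.add_sub_cancel]
    have hbridge := SimpleGraph.isAcyclic_iff_forall_adj_isBridge.mp hF he
    have ih' := ih (hF.anti (SimpleGraph.deleteEdges_le _)) hE'
    rw [hE'] at ih'
    rw [hE]
    calc numProperColorings F q * q ^ (E + 1)
        = (q * numProperColorings F q) * q ^ E := by ring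
      _ = (q - 1) * (numProperColorings (F.deleteEdges {s(u, v)}) q * q ^ E) := by
        rw [mul_numProperColorings_of_isBridge he hbridge]; ring
      _ = q ^ Fintype.card V * (q - 1) ^ (E + 1) := by
        rw [ih']; ring

end Forests

lemma _root_.SimpleGraph.Reachable.exists_adj_dist_lt {G : SimpleGraph V} {v r : V}
    (h : G.Reachable v r) (hne : v ≠ r) : ∃ u, G.Adj v u ∧ G.dist u r < G.dist v r := by
  obtain ⟨w, hw⟩ := h.exists_walk_length_eq_dist
  cases w with
  | nil => exact absurd rfl hne
  | cons hadj p =>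
    refine ⟨_, hadj, ?_⟩
    have := SimpleGraph.dist_le p
    rw [SimpleGraph.Walk.length_cons] at hw
    omega

/-- Every vertex other than a chosen root of its component is sent to the first edge of a
shortest path to that root; this is injective since distances to the root decrease. -/
lemma card_le_card_connectedComponent_add_card_edgeSet [Fintype V] (G : SimpleGraph V) :
    Fintype.card V ≤ Nat.card G.ConnectedComponent + Nat.card G.edgeSet := by
  let root (v : V) : V := (G.connectedComponentMk v).out
  have hroot (v : V) : G.Reachable v (root v) :=
    (SimpleGraph.ConnectedComponent.eq.mp (G.connectedComponentMk v).out_eq).symm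
  have hroot_eq {a b : V} (h : G.Adj a b) : root a = root b := by
    simp only [root, SimpleGraph.ConnectedComponent.eq.mpr h.reachable]
  choose parent hparent using fun v (h : v ≠ root v) => (hroot v).exists_adj_dist_lt h
  let f (v : V) : G.ConnectedComponent ⊕ G.edgeSet :=
    if h : v = root v then .inl (G.connectedComponentMk v)
    else .inr ⟨s(v, parent v h), (hparent v h).1⟩
  have hf : Function.Injective f := by
    intro a b hab
    by_cases ha : a = root a <;> by_cases hb : b = root b
    · simp only [f, dif_pos ha, dif_pos hb, Sum.inl.injEq] at hab
      rw [ha, hb]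
      exact congrArg Quot.out hab
    · simp [f, dif_pos ha, dif_neg hb] at hab
    · simp [f, dif_neg ha, dif_pos hb] at hab
    · simp only [f, dif_neg ha, dif_neg hb, Sum.inr.injEq, Subtype.ext_iff, Sym2.eq_iff] at hab
      rcases hab with ⟨h, -⟩ | ⟨hab, hba⟩
      · exact h
      · have h1 := (hparent a ha).2
        have h2 := (hparent b hb).2
        have hr : root a = root b := (hroot_eq (hparent a ha).1).trans (by rw [hba])
        rw [hba, hr] at h1
        rw [← hab] at h2
        omega
  simpa [Nat.card_eq_fintype_card] using Fintype.card_le_of_injective f hf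

open Polynomial in
/-- If `∑ aᵢ tᵉⁱ = tᴺ` for infinitely many `t`, this is an identity of polynomials. -/
lemma sum_filter_eq_zero_of_sum_mul_pow_eq_pow {K ι : Type*} [CommRing K] [IsDomain K]
    (s : Finset ι) (a : ι → K) (e : ι → ℕ) {N : ℕ} {T : Set K} (hT : T.Infinite)
    (h : ∀ t ∈ T, ∑ i ∈ s, a i * t ^ e i = t ^ N) {k : ℕ} (hk : k ≠ N) :
    ∑ i ∈ s with e i = k, a i = 0 := by
  let P : K[X] := ∑ i ∈ s, C (a i) * X ^ e i - X ^ N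
  have hP : P = 0 := P.eq_zero_of_infinite_isRoot <| hT.mono fun t ht => by
    simp [P, eval_finsetSum, h t ht]
  have := congrArg (coeff · k) hP
  simpa [P, finsetSum_coeff, coeff_C_mul_X_pow, hk, Finset.sum_filter, eq_comm] using this

lemma injOn_div_sub_one : Set.InjOn (fun q : ℕ => (q : ℚ) / (q - 1)) (Set.Ici 2) := by
  intro a ha b hb hab
  have ha' : (a : ℚ) - 1 ≠ 0 := by rw [sub_ne_zero]; exact_mod_cast (by grind : a ≠ 1)
  have hb' : (b : ℚ) - 1 ≠ 0 := by rw [sub_ne_zero]; exact_mod_cast (by grind : b ≠ 1)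
  rw [div_eq_div_iff ha' hb'] at hab
  exact_mod_cast (by linarith : (a : ℚ) = b)

lemma sum_coeff_mul_pow_eq_pow_of_isAcyclic [Fintype V] {F : SimpleGraph V} (hF : F.IsAcyclic)
    (c : Nat.Partition (Fintype.card V) → ℚ)
    (hc : csf F = ∑ p : Nat.Partition (Fintype.card V), c p • stPart p) {q : ℕ} (hq : 2 ≤ q) :
    ∑ p : Nat.Partition (Fintype.card V),
        c p * ((q : ℚ) / (q - 1)) ^ (Multiset.card p.parts + Nat.card F.edgeSet) =
      ((q : ℚ) / (q - 1)) ^ Fintype.card V := by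
  set t := (q : ℚ) / (q - 1)
  have hy : (q : ℚ) - 1 ≠ 0 := by
    rw [sub_ne_zero]; exact_mod_cast (by omega : q ≠ 1)
  have ht : (q : ℚ) = t * (q - 1) := (div_mul_cancel₀ _ hy).symm
  have hforest := congrArg (Nat.cast : ℕ → ℚ) (numProperColorings_mul_pow_of_isAcyclic hF q)
  push_cast [Nat.cast_sub (by omega : 1 ≤ q)] at hforest
  rw [numProperColorings_eq_sum_of_csf_eq F c hc q] at hforest
  simp only [prod_numProperColorings_starGraph _ (by omega : 1 ≤ q) ht] at hforest
  set y := (q : ℚ) - 1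
  clear_value t y
  refine mul_right_cancel₀ (pow_ne_zero (Fintype.card V + Nat.card F.edgeSet) hy) ?_
  calc _ = (∑ p, c p * (t ^ Multiset.card p.parts * y ^ Fintype.card V)) *
          (t * y) ^ Nat.card F.edgeSet := by
        rw [Finset.sum_mul, Finset.sum_mul]
        exact Finset.sum_congr rfl fun p _ => by ring
    _ = q ^ Fintype.card V * y ^ Nat.card F.edgeSet := by rw [← ht, hforest]
    _ = _ := by rw [ht]; ring

/-- For a forest `F`, the sum of star-basis coefficients of `X_F` over
all partitions with exactly `m` parts vanishes whenever `m > cc(F)`. -/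
theorem sum_of_coefficients_of_long_partitions_eq_zero
    {V : Type} [Fintype V] (F : SimpleGraph V) (hF : F.IsAcyclic)
    (c : Nat.Partition (Fintype.card V) → ℚ)
    (hc : csf F = ∑ p : Nat.Partition (Fintype.card V), c p • stPart p)
    (m : ℕ) (hm : Nat.card F.ConnectedComponent < m) :
    ∑ p ∈ Finset.univ.filter
        (fun p : Nat.Partition (Fintype.card V) => Multiset.card p.parts = m),
      c p = 0 := by
  have hlen : m + Nat.card F.edgeSet ≠ Fintype.card V := by
    have := card_le_card_connectedComponent_add_card_edgeSet F
    omega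
  have h := sum_filter_eq_zero_of_sum_mul_pow_eq_pow Finset.univ c
    (fun p => Multiset.card p.parts + Nat.card F.edgeSet)
    ((Set.Ici_infinite 2).image injOn_div_sub_one)
    (by rintro _ ⟨q, hq, rfl⟩; exact sum_coeff_mul_pow_eq_pow_of_isAcyclic hF c hc hq) hlen
  simpa only [add_left_inj] using h

end

end CSFPaper
end

section
/- Let F be a forest and e = uv an internal edge of F. Let κ_i and κ_j be the orders of the leaf components of F containing u and v, respectively. Then λ_LC((F⊙e) ∖ ℓ_e) is obtained from λ_LC(F) by removing the parts κ_i and κ_j and inserting the parts κ_i + κ_j − 1 and 1 (then sorting into nonincreasing order). -/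
open scoped Classical

namespace CSFPaper

noncomputable section

variable {V : Type*}

/-! In `F ∖ I(F)` the leaf component of an internal vertex `w` consists of `w` and its leaf
neighbours. Dot-contracting `uv` hands the leaf neighbours of `v` over to `u` (degrees of all
other vertices are unchanged, since a forest has no triangles), isolates `v`, and changes no edge
outside the two leaf components of `u` and `v`; so these two components, of orders `κ_i` and
`κ_j`, become components of orders `κ_i + κ_j - 1` and `1`, and all others survive. -/

section Components

open SimpleGraph

variable {G G' : SimpleGraph V}

theorem mem_of_reachable_of_adj_closed {S : Set V} (hS : ∀ x y, G.Adj x y → x ∈ S → y ∈ S)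
    {x y : V} (hxy : G.Reachable x y) (hx : x ∈ S) : y ∈ S := by
  obtain ⟨p⟩ := hxy
  induction p with
  | nil => exact hx
  | cons h _ ih => exact ih (hS _ _ h hx)

theorem supp_eq_singleton_of_forall_not_adj {v : V} (hv : ∀ x, ¬ G.Adj v x) :
    (G.connectedComponentMk v).supp = {v} := by
  ext x
  rw [ConnectedComponent.mem_supp_iff, ConnectedComponent.eq, Set.mem_singleton_iff]
  refine ⟨fun h => mem_of_reachable_of_adj_closed (S := {v}) ?_ h.symm rfl, fun h => h ▸ .rfl⟩
  rintro a b hab rfl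
  exact absurd hab (hv b)

theorem reachable_of_adj_iff_outside {T : Set V} (hG : ∀ x y, G.Adj x y → x ∉ T → y ∉ T)
    (hagree : ∀ x y, x ∉ T → y ∉ T → (G.Adj x y ↔ G'.Adj x y)) {x y : V} (hx : x ∉ T)
    (hxy : G.Reachable x y) : G'.Reachable x y :=
  (mem_of_reachable_of_adj_closed (S := {z | z ∉ T ∧ G'.Reachable x z})
    (fun a b hab ⟨ha, hxa⟩ =>
      ⟨hG a b hab ha, hxa.trans ((hagree a b ha (hG a b hab ha)).mp hab).reachable⟩)
    hxy ⟨hx, .refl x⟩).2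

theorem supp_eq_of_adj_iff_outside {T : Set V} (hG : ∀ x y, G.Adj x y → x ∉ T → y ∉ T)
    (hG' : ∀ x y, G'.Adj x y → x ∉ T → y ∉ T)
    (hagree : ∀ x y, x ∉ T → y ∉ T → (G.Adj x y ↔ G'.Adj x y)) {x : V} (hx : x ∉ T) :
    (G.connectedComponentMk x).supp = (G'.connectedComponentMk x).supp := by
  ext y
  simp only [ConnectedComponent.mem_supp_iff, ConnectedComponent.eq, reachable_comm (u := y)]
  exact ⟨reachable_of_adj_iff_outside hG hagree hx,
    reachable_of_adj_iff_outside hG' (fun a b ha hb => (hagree a b ha hb).symm) hx⟩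

theorem notMem_supp_union_of_adj (C D : G.ConnectedComponent) {x y : V} (hxy : G.Adj x y)
    (hx : x ∉ C.supp ∪ D.supp) : y ∉ C.supp ∪ D.supp := by
  rwa [Set.mem_union, ← C.mem_supp_congr_adj hxy, ← D.mem_supp_congr_adj hxy]

variable [Fintype V]

/-- Components are recorded by their supports, so that those of two graphs on `V` can be
compared. -/
def suppsOutside (G : SimpleGraph V) (T : Set V) : Finset (Set V) :=
  (Finset.univ.filter (· ∉ T)).image fun x => (G.connectedComponentMk x).supp

theorem compSizes_eq_cons_cons {C D : G.ConnectedComponent} (hCD : C ≠ D) :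
    compSizes G = Nat.card C.supp ::ₘ Nat.card D.supp ::ₘ
      (suppsOutside G (C.supp ∪ D.supp)).val.map fun s : Set V => Nat.card s := by
  have hsupps : (Finset.univ.image G.connectedComponentMk).image ConnectedComponent.supp =
      insert C.supp (insert D.supp (suppsOutside G (C.supp ∪ D.supp))) := by
    ext s
    simp only [suppsOutside, Finset.mem_image, Finset.mem_insert, Finset.mem_filter,
      Finset.mem_univ, true_and, exists_exists_eq_and]
    constructor
    · rintro ⟨x, rfl⟩
      by_cases hxC : x ∈ C.supp
      · exact .inl (congrArg _ hxC)
      by_cases hxD : x ∈ D.supp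
      · exact .inr (.inl (congrArg _ hxD))
      exact .inr (.inr ⟨x, by simp [hxC, hxD]⟩)
    · rintro (rfl | rfl | ⟨x, -, rfl⟩)
      exacts [⟨_, congrArg _ C.exists_rep.choose_spec⟩,
        ⟨_, congrArg _ D.exists_rep.choose_spec⟩, ⟨x, rfl⟩]
  have houtside : ∀ E : G.ConnectedComponent, E.supp ⊆ C.supp ∪ D.supp →
      E.supp ∉ suppsOutside G (C.supp ∪ D.supp) := by
    intro E hE hmem
    obtain ⟨x, hx, hxE⟩ := Finset.mem_image.mp hmem
    simp only [Finset.mem_filter, Finset.mem_univ, true_and] at hx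
    exact hx (hE (hxE ▸ ConnectedComponent.connectedComponentMk_mem))
  have hC : C.supp ∉ insert D.supp (suppsOutside G (C.supp ∪ D.supp)) := by
    rw [Finset.mem_insert, not_or, ConnectedComponent.supp_inj]
    exact ⟨hCD, houtside C Set.subset_union_left⟩
  calc compSizes G
      = ((Finset.univ.image G.connectedComponentMk).image ConnectedComponent.supp).val.map
          fun s : Set V => Nat.card s := by
        rw [Finset.image_val_of_injOn ConnectedComponent.supp_injective.injOn, Multiset.map_map]
        rfl
    _ = _ := by
        rw [hsupps, Finset.insert_val_of_notMem hC,
          Finset.insert_val_of_notMem (houtside D Set.subset_union_right), Multiset.map_cons,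
          Multiset.map_cons]

theorem compSizes_eq_of_adj_iff_outside {C D : G.ConnectedComponent}
    {C' D' : G'.ConnectedComponent} (hCD : C ≠ D) (hCD' : C' ≠ D')
    (hsupp : C.supp ∪ D.supp = C'.supp ∪ D'.supp)
    (hagree : ∀ x y, x ∉ C.supp ∪ D.supp → y ∉ C.supp ∪ D.supp →
      (G.Adj x y ↔ G'.Adj x y)) :
    compSizes G' = Nat.card C'.supp ::ₘ Nat.card D'.supp ::ₘ
      ((compSizes G).erase (Nat.card C.supp)).erase (Nat.card D.supp) := by
  have houtside : suppsOutside G (C.supp ∪ D.supp) = suppsOutside G' (C.supp ∪ D.supp) := by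
    refine Finset.image_congr fun x hx => supp_eq_of_adj_iff_outside
      (fun a b hab => notMem_supp_union_of_adj C D hab) ?_ hagree (by simpa using hx)
    rw [hsupp]
    exact fun a b hab => notMem_supp_union_of_adj C' D' hab
  rw [compSizes_eq_cons_cons hCD, compSizes_eq_cons_cons hCD', Multiset.erase_cons_head,
    Multiset.erase_cons_head, houtside, hsupp]

end Components

section LeafComponents

open SimpleGraph

variable [Fintype V] {G : SimpleGraph V}

def leafNeighbors (G : SimpleGraph V) (w : V) : Set V := {x | G.Adj w x ∧ G.degree x ≤ 1}

theorem self_notMem_leafNeighbors (w : V) : w ∉ leafNeighbors G w :=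
  fun h => h.1.ne rfl

theorem notMem_leafNeighbors_of_two_le_degree {w x : V} (hx : 2 ≤ G.degree x) :
    x ∉ leafNeighbors G w :=
  fun h => by have := h.2; omega

theorem mem_internalEdges_iff {a b : V} :
    s(a, b) ∈ internalEdges G ↔ G.Adj a b ∧ 2 ≤ G.degree a ∧ 2 ≤ G.degree b := by
  simp only [internalEdges, Set.mem_ofPred_eq, mem_edgeSet, Sym2.mem_iff, forall_eq_or_imp,
    forall_eq]

theorem lcGraph_adj {a b : V} :
    (lcGraph G).Adj a b ↔ G.Adj a b ∧ (G.degree a ≤ 1 ∨ G.degree b ≤ 1) := by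
  rw [lcGraph, deleteEdges_adj, mem_internalEdges_iff]
  exact and_congr_right fun hab => by simp only [hab, true_and, not_and, not_le]; omega

theorem supp_lcGraph_of_two_le_degree {w : V} (hw : 2 ≤ G.degree w) :
    ((lcGraph G).connectedComponentMk w).supp = insert w (leafNeighbors G w) := by
  ext x
  rw [ConnectedComponent.mem_supp_iff, ConnectedComponent.eq]
  refine ⟨fun h => mem_of_reachable_of_adj_closed ?_ h.symm (Set.mem_insert w _), ?_⟩
  · rintro a b hab (rfl | ⟨hwa, ha⟩) <;> rw [lcGraph_adj] at hab
    · exact .inr ⟨hab.1, by omega⟩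
    · exact .inl (Finset.card_le_one.mp ha b (by simpa using hab.1) w (by simpa using hwa.symm))
  · rintro (rfl | ⟨hwx, hx⟩)
    · rfl
    · exact (lcGraph_adj.mpr ⟨hwx, .inr hx⟩).reachable.symm

theorem lcGraph_connectedComponentMk_ne {u v : V} (huv : G.Adj u v) (hu : 2 ≤ G.degree u)
    (hv : 2 ≤ G.degree v) :
    (lcGraph G).connectedComponentMk u ≠ (lcGraph G).connectedComponentMk v := by
  intro h
  have hvu : v ∈ ((lcGraph G).connectedComponentMk u).supp := h.symm
  rw [supp_lcGraph_of_two_le_degree hu] at hvu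
  rcases hvu with h | h
  exacts [huv.ne h.symm, notMem_leafNeighbors_of_two_le_degree hv h]

end LeafComponents

section DotContraction

open SimpleGraph

theorem _root_.SimpleGraph.IsAcyclic.not_adj_of_adj_of_adj {G : SimpleGraph V}
    (hG : G.IsAcyclic) {a b c : V} (hab : G.Adj a b) (hac : G.Adj a c) : ¬ G.Adj b c :=
  fun hbc => hG.cliqueFree le_rfl {a, b, c} (is3Clique_triple_iff.mpr ⟨hab, hac, hbc⟩)

variable {F : SimpleGraph V} {u v : V}

theorem dotContract_adj_iff_of_ne {x y : V} (hxu : x ≠ u) (hxv : x ≠ v) (hyu : y ≠ u)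
    (hyv : y ≠ v) : (dotContract F u v).Adj x y ↔ F.Adj x y := by
  simp only [dotContract, hxu, hyu, false_and, or_false]
  exact ⟨fun h => h.2.2.2, fun h => ⟨h.ne, hxv, hyv, h⟩⟩

theorem dotContract_not_adj_right (x : V) : ¬ (dotContract F u v).Adj v x :=
  fun h => h.2.1 rfl

variable [Fintype V]

theorem degree_dotContract_of_ne (hF : F.IsAcyclic) (huv : F.Adj u v) {w : V} (hwu : w ≠ u)
    (hwv : w ≠ v) : (dotContract F u v).degree w = F.degree w := by
  rw [← card_neighborFinset_eq_degree, ← card_neighborFinset_eq_degree]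
  by_cases hvw : F.Adj v w
  · have huw : ¬ F.Adj u w := fun huw => hF.not_adj_of_adj_of_adj huv huw hvw
    have hswap : (dotContract F u v).neighborFinset w =
        (F.neighborFinset w).map (Equiv.swap u v).toEmbedding := by
      ext x
      rw [Finset.mem_map_equiv, mem_neighborFinset, mem_neighborFinset, Equiv.symm_swap,
        Equiv.swap_apply_def]
      simp only [dotContract]
      split_ifs <;> grind [adj_comm, SimpleGraph.irrefl]
    rw [hswap, Finset.card_map]
  · congr 1
    ext x
    rw [mem_neighborFinset, mem_neighborFinset]
    simp only [dotContract]
    grind [adj_comm, SimpleGraph.irrefl]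

theorem two_le_degree_dotContract (hF : F.IsAcyclic) (huv : F.Adj u v) (hu : 2 ≤ F.degree u)
    (hv : 2 ≤ F.degree v) : 2 ≤ (dotContract F u v).degree u := by
  obtain ⟨a, ha, hav⟩ := Finset.exists_mem_ne hu v
  obtain ⟨b, hb, hbu⟩ := Finset.exists_mem_ne hv u
  rw [mem_neighborFinset] at ha hb
  have hab : a ≠ b := by
    rintro rfl
    exact hF.not_adj_of_adj_of_adj huv ha hb
  rw [← card_neighborFinset_eq_degree, ← Finset.card_pair hab]
  refine Finset.card_le_card fun x hx => ?_
  rw [mem_neighborFinset]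
  rcases Finset.mem_insert.mp hx with rfl | hx
  · exact ⟨ha.ne, huv.ne, hav, .inl ha⟩
  · rw [Finset.mem_singleton.mp hx]
    exact ⟨hbu.symm, huv.ne, hb.ne', .inr (.inl ⟨rfl, hb⟩)⟩

theorem leafNeighbors_dotContract (hF : F.IsAcyclic) (huv : F.Adj u v) (hu : 2 ≤ F.degree u)
    (hv : 2 ≤ F.degree v) :
    leafNeighbors (dotContract F u v) u = leafNeighbors F u ∪ leafNeighbors F v := by
  ext x
  simp only [leafNeighbors, Set.mem_union, Set.mem_ofPred_eq]
  rcases eq_or_ne x u with rfl | hxu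
  · grind [SimpleGraph.irrefl, dotContract]
  rcases eq_or_ne x v with rfl | hxv
  · grind [SimpleGraph.irrefl, dotContract]
  rw [degree_dotContract_of_ne hF huv hxu hxv]
  simp only [dotContract, ne_eq, Ne.symm hxu, hxv, huv.ne, hxu, not_false_eq_true, true_and,
    false_and, or_false, or_and_right]

theorem supp_lcGraph_dotContract_left (hF : F.IsAcyclic) (huv : F.Adj u v) (hu : 2 ≤ F.degree u)
    (hv : 2 ≤ F.degree v) :
    ((lcGraph (dotContract F u v)).connectedComponentMk u).supp =
      insert u (leafNeighbors F u ∪ leafNeighbors F v) := by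
  rw [supp_lcGraph_of_two_le_degree (two_le_degree_dotContract hF huv hu hv),
    leafNeighbors_dotContract hF huv hu hv]

theorem supp_lcGraph_dotContract_right :
    ((lcGraph (dotContract F u v)).connectedComponentMk v).supp = {v} :=
  supp_eq_singleton_of_forall_not_adj fun x h => dotContract_not_adj_right x (lcGraph_adj.mp h).1

theorem lcGraph_dotContract_connectedComponentMk_ne (huv : u ≠ v) :
    (lcGraph (dotContract F u v)).connectedComponentMk u ≠
      (lcGraph (dotContract F u v)).connectedComponentMk v := by
  intro h
  have hu : u ∈ ((lcGraph (dotContract F u v)).connectedComponentMk v).supp := h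
  rw [supp_lcGraph_dotContract_right] at hu
  exact huv hu

theorem supp_union_lcGraph_dotContract (hF : F.IsAcyclic) (huv : F.Adj u v)
    (hu : 2 ≤ F.degree u) (hv : 2 ≤ F.degree v) :
    ((lcGraph F).connectedComponentMk u).supp ∪ ((lcGraph F).connectedComponentMk v).supp =
      ((lcGraph (dotContract F u v)).connectedComponentMk u).supp ∪
        ((lcGraph (dotContract F u v)).connectedComponentMk v).supp := by
  rw [supp_lcGraph_of_two_le_degree hu, supp_lcGraph_of_two_le_degree hv,
    supp_lcGraph_dotContract_left hF huv hu hv, supp_lcGraph_dotContract_right]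
  ext x
  simp only [Set.mem_union, Set.mem_insert_iff, Set.mem_singleton_iff]
  tauto

theorem lcGraph_dotContract_adj_iff_outside (hF : F.IsAcyclic) (huv : F.Adj u v)
    (hu : 2 ≤ F.degree u) (hv : 2 ≤ F.degree v) (x y : V)
    (hx : x ∉ ((lcGraph F).connectedComponentMk u).supp ∪
      ((lcGraph F).connectedComponentMk v).supp)
    (hy : y ∉ ((lcGraph F).connectedComponentMk u).supp ∪
      ((lcGraph F).connectedComponentMk v).supp) :
    (lcGraph F).Adj x y ↔ (lcGraph (dotContract F u v)).Adj x y := by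
  simp only [supp_lcGraph_of_two_le_degree hu, supp_lcGraph_of_two_le_degree hv, Set.mem_union,
    Set.mem_insert_iff, not_or] at hx hy
  rw [lcGraph_adj, lcGraph_adj, dotContract_adj_iff_of_ne hx.1.1 hx.2.1 hy.1.1 hy.2.1,
    degree_dotContract_of_ne hF huv hx.1.1 hx.2.1, degree_dotContract_of_ne hF huv hy.1.1 hy.2.1]

theorem card_supp_lcGraph_dotContract_left (hF : F.IsAcyclic) (huv : F.Adj u v)
    (hu : 2 ≤ F.degree u) (hv : 2 ≤ F.degree v) :
    Nat.card ((lcGraph (dotContract F u v)).connectedComponentMk u).supp =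
      Nat.card ((lcGraph F).connectedComponentMk u).supp +
        Nat.card ((lcGraph F).connectedComponentMk v).supp - 1 := by
  have hdisj : Disjoint (leafNeighbors F u) (leafNeighbors F v) :=
    Set.disjoint_left.mpr fun x hxu hxv => hF.not_adj_of_adj_of_adj huv hxu.1 hxv.1
  have hu_notMem : u ∉ leafNeighbors F u ∪ leafNeighbors F v := by
    rintro (h | h)
    exacts [self_notMem_leafNeighbors u h, notMem_leafNeighbors_of_two_le_degree hu h]
  simp only [Nat.card_coe_set_eq, supp_lcGraph_dotContract_left hF huv hu hv,
    supp_lcGraph_of_two_le_degree hu, supp_lcGraph_of_two_le_degree hv]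
  rw [Set.ncard_insert_of_notMem hu_notMem,
    Set.ncard_insert_of_notMem (self_notMem_leafNeighbors u),
    Set.ncard_insert_of_notMem (self_notMem_leafNeighbors v), Set.ncard_union_eq hdisj]
  omega

end DotContraction

/-- **Dot-contraction Lemma.** The leaf component partition of the
dot-contraction of a forest along an internal edge `e = uv`: the orders `κ_i`, `κ_j` of
the leaf components containing `u` and `v` are replaced by `κ_i + κ_j - 1` and `1`. -/
theorem dot_contraction_lemma
    {V : Type} [Fintype V] (F : SimpleGraph V) (hF : F.IsAcyclic)
    (u v : V) (he : s(u, v) ∈ internalEdges F) :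
    lcMultiset (dotContract F u v) =
      (leafCompOrder F u + leafCompOrder F v - 1) ::ₘ 1 ::ₘ
        (((lcMultiset F).erase (leafCompOrder F u)).erase (leafCompOrder F v)) := by
  obtain ⟨huv, hu, hv⟩ := mem_internalEdges_iff.mp he
  have key := compSizes_eq_of_adj_iff_outside (lcGraph_connectedComponentMk_ne huv hu hv)
    (lcGraph_dotContract_connectedComponentMk_ne huv.ne)
    (supp_union_lcGraph_dotContract hF huv hu hv)
    (lcGraph_dotContract_adj_iff_outside hF huv hu hv)
  rwa [card_supp_lcGraph_dotContract_left hF huv hu hv, supp_lcGraph_dotContract_right,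
    Nat.card_unique (α := ({v} : Set V))] at key

end

end CSFPaper
end

section
/- For any tree T, the internal subgraph 𝓘_T is acyclic, and if 𝓘_T is nonempty then it is connected; hence whenever it is nonempty, the internal subgraph of a tree is itself a tree. -/
open scoped Classical

namespace CSFPaper

noncomputable section

variable {V : Type*}

/-- The internal degree of a vertex: the number of internal vertices among its
neighbors. -/
def internalDeg {W : Type} [Fintype W] (T : SimpleGraph W) (v : W) : ℕ :=
  ((T.neighborFinset v).filter fun u => 2 ≤ T.degree u).card

/-- The vertex set of the internal subgraph `𝓘_T`: the vertices of internal degree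
greater than 1, together with all leaves of `T` adjacent to such vertices. -/
def internalSubVerts {W : Type} [Fintype W] (T : SimpleGraph W) : Set W :=
  {v | 1 < internalDeg T v} ∪
    {v | T.degree v = 1 ∧ ∃ u, T.Adj v u ∧ 1 < internalDeg T u}

end

end CSFPaper

/-! Acyclicity passes to induced subgraphs. For connectivity, take the path of `T` between two
vertices of `𝓘_T`; each interior vertex `x` of it has two distinct neighbours on the path. An
interior neighbour has degree at least 2, and so does an endpoint neighbour, unless it is a leaf
of `𝓘_T`, whose unique neighbour `x` then has internal degree greater than 1 by definition.
Either way `x` has internal degree greater than 1, so the whole path lies in `𝓘_T`. -/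

namespace SimpleGraph

variable {V : Type*} {G : SimpleGraph V}

lemma Preconnected.induce_of_isPath_support_subset (hG : G.Preconnected) {s : Set V}
    (hs : ∀ u ∈ s, ∀ v ∈ s, ∀ p : G.Walk u v, p.IsPath → ∀ x ∈ p.support, x ∈ s) :
    (G.induce s).Preconnected := by
  rintro ⟨u, hu⟩ ⟨v, hv⟩
  obtain ⟨p, hp⟩ := hG.exists_isPath u v
  exact ⟨p.induce s (hs u hu v hv p hp)⟩

lemma Walk.IsPath.getVert_pred_ne_getVert_succ {u v : V} {p : G.Walk u v} (hp : p.IsPath)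
    {i : ℕ} (h0 : 0 < i) (hi : i < p.length) : p.getVert (i - 1) ≠ p.getVert (i + 1) := by
  intro h
  have := hp.getVert_injOn (by simp only [Set.mem_ofPred_eq]; omega)
    (by simp only [Set.mem_ofPred_eq]; omega) h
  omega

lemma Walk.adj_getVert_pred {u v : V} (p : G.Walk u v) {i : ℕ} (h0 : 0 < i)
    (hi : i ≤ p.length) : G.Adj (p.getVert i) (p.getVert (i - 1)) := by
  have := p.adj_getVert_succ (i := i - 1) (by omega)
  rwa [Nat.sub_add_cancel h0, adj_comm] at this

lemma Walk.IsPath.two_le_degree_getVert [G.LocallyFinite] {u v : V} {p : G.Walk u v}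
    (hp : p.IsPath) {i : ℕ} (h0 : 0 < i) (hi : i < p.length) : 2 ≤ G.degree (p.getVert i) := by
  rw [← card_neighborFinset_eq_degree]
  exact Finset.one_lt_card.mpr ⟨_, (mem_neighborFinset ..).mpr (p.adj_getVert_pred h0 hi.le),
    _, (mem_neighborFinset ..).mpr (p.adj_getVert_succ hi),
    hp.getVert_pred_ne_getVert_succ h0 hi⟩

end SimpleGraph

namespace CSFPaper

open SimpleGraph

variable {W : Type} [Fintype W] {T : SimpleGraph W}

lemma two_le_degree_of_one_lt_internalDeg {v : W} (h : 1 < internalDeg T v) :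
    2 ≤ T.degree v := by
  have : internalDeg T v ≤ T.degree v := by
    rw [← card_neighborFinset_eq_degree]
    exact Finset.card_filter_le _ _
  omega

lemma one_lt_internalDeg_of_adj {x a b : W} (ha : T.Adj x a) (hb : T.Adj x b) (hab : a ≠ b)
    (hda : 2 ≤ T.degree a) (hdb : 2 ≤ T.degree b) : 1 < internalDeg T x :=
  Finset.one_lt_card.mpr ⟨a, by simp [ha, hda], b, by simp [hb, hdb], hab⟩

lemma two_le_degree_or_one_lt_internalDeg_of_adj {x a : W} (hxa : T.Adj x a)
    (ha : a ∈ internalSubVerts T) : 2 ≤ T.degree a ∨ 1 < internalDeg T x := by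
  rcases ha with ha | ⟨hleaf, y, hay, hy⟩
  · exact Or.inl (two_le_degree_of_one_lt_internalDeg ha)
  · have hxy : x = y := by
      have : (T.neighborFinset a).card ≤ 1 := by rw [card_neighborFinset_eq_degree, hleaf]
      exact Finset.card_le_one.mp this x (by simpa using hxa.symm) y (by simpa using hay)
    exact Or.inr (hxy ▸ hy)

lemma one_lt_internalDeg_getVert {u w : W} {p : T.Walk u w} (hp : p.IsPath)
    (hu : u ∈ internalSubVerts T) (hw : w ∈ internalSubVerts T) {i : ℕ} (h0 : 0 < i)
    (hi : i < p.length) : 1 < internalDeg T (p.getVert i) := by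
  have hnbr : ∀ j ≤ p.length, T.Adj (p.getVert i) (p.getVert j) →
      2 ≤ T.degree (p.getVert j) ∨ 1 < internalDeg T (p.getVert i) := by
    intro j hj hadj
    rcases (show j = 0 ∨ j = p.length ∨ (0 < j ∧ j < p.length) by omega)
      with rfl | rfl | ⟨hj0, hjl⟩
    · exact two_le_degree_or_one_lt_internalDeg_of_adj hadj (by rwa [p.getVert_zero])
    · exact two_le_degree_or_one_lt_internalDeg_of_adj hadj (by rwa [p.getVert_length])
    · exact Or.inl (hp.two_le_degree_getVert hj0 hjl)
  rcases hnbr (i - 1) (by omega) (p.adj_getVert_pred h0 hi.le) with hpred | done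
  · rcases hnbr (i + 1) hi (p.adj_getVert_succ hi) with hsucc | done
    · exact one_lt_internalDeg_of_adj (p.adj_getVert_pred h0 hi.le) (p.adj_getVert_succ hi)
        (hp.getVert_pred_ne_getVert_succ h0 hi) hpred hsucc
    · exact done
  · exact done

lemma mem_internalSubVerts_of_mem_support {u w : W} {p : T.Walk u w} (hp : p.IsPath)
    (hu : u ∈ internalSubVerts T) (hw : w ∈ internalSubVerts T) {x : W} (hx : x ∈ p.support) :
    x ∈ internalSubVerts T := by
  obtain ⟨i, rfl, hi⟩ := Walk.mem_support_iff_exists_getVert.mp hx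
  rcases (show i = 0 ∨ i = p.length ∨ (0 < i ∧ i < p.length) by omega)
    with rfl | rfl | ⟨h0, hil⟩
  · rwa [p.getVert_zero]
  · rwa [p.getVert_length]
  · exact Or.inl (one_lt_internalDeg_getVert hp hu hw h0 hil)

/-- The internal subgraph of a tree is acyclic, and connected whenever
it is nonempty; hence it is a tree whenever it is nonempty. -/
theorem internal_subgraph_is_tree
    {V : Type} [Fintype V] (T : SimpleGraph V) (hTc : T.Connected) (hTa : T.IsAcyclic) :
    (T.induce (internalSubVerts T)).IsAcyclic ∧
      ((internalSubVerts T).Nonempty → (T.induce (internalSubVerts T)).Connected) := by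
  refine ⟨hTa.induce _, fun hne => ?_⟩
  have := hne.to_subtype
  exact ⟨hTc.preconnected.induce_of_isPath_support_subset fun _ hu _ hw _ hp _ hx =>
    mem_internalSubVerts_of_mem_support hp hu hw hx⟩

end CSFPaper
end

section
/- Let d ≥ 4 be an integer and let T be a tree of diameter d. Then every path in the internal subgraph 𝓘_T contains at most d − 4 internal edges of T. -/
open scoped Classical

namespace CSFPaper

noncomputable section

variable {V : Type*}

/-!
The internal edges of a path in `𝓘_T` lie on a path `Q` whose endpoints have internal degree
at least two: an endpoint that is a leaf of `T` is cut off (a trivial path is instead prolonged to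
the leaf's neighbour), and the edge at a leaf is never internal. In a tree at most one neighbour of
an endpoint of `Q` lies on `Q`, so each end of `Q` has an internal neighbour off `Q`, which in turn
has a further neighbour; this prolongs `Q` by two edges at each end, to a path of length
`|Q| + 4 ≤ d`.
-/

section Acyclic

open SimpleGraph

variable {V : Type*} {G : SimpleGraph V} {u v w : V}

theorem _root_.SimpleGraph.IsAcyclic.isPath_cons_of_ne_snd (hG : G.IsAcyclic)
    {p : G.Walk v w} (hp : p.IsPath) (h : G.Adj u v) (hu : u ≠ p.snd) :
    (Walk.cons h p).IsPath :=
  (Walk.cons_isPath_iff h p).mpr ⟨hp, fun hmem => hu (hG.eq_snd_of_adj_start hp h.symm hmem)⟩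

theorem _root_.SimpleGraph.IsAcyclic.length_eq_dist (hG : G.IsAcyclic)
    {p : G.Walk u v} (hp : p.IsPath) : p.length = G.dist u v := by
  obtain ⟨q, hq, hq_len⟩ := p.reachable.exists_path_of_dist
  have hpq : p = q := congrArg Subtype.val ((hG.subsingleton_path u v).elim ⟨p, hp⟩ ⟨q, hq⟩)
  rw [hpq, hq_len]

end Acyclic

section InternalSubgraph

open SimpleGraph

variable {V : Type} [Fintype V] {T : SimpleGraph V} {x w : V}

theorem exists_internal_adj_ne (hx : 1 < internalDeg T x) (y : V) :
    ∃ z, T.Adj x z ∧ 2 ≤ T.degree z ∧ z ≠ y := by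
  obtain ⟨z, hz, hzy⟩ := Finset.exists_mem_ne hx y
  rw [Finset.mem_filter, mem_neighborFinset] at hz
  exact ⟨z, hz.1, hz.2, hzy⟩

theorem exists_isPath_length_add_two (hT : T.IsAcyclic) {p : T.Walk x w} (hp : p.IsPath)
    (hx : 1 < internalDeg T x) :
    ∃ (z : V) (r : T.Walk z w), r.IsPath ∧ r.length = p.length + 2 := by
  obtain ⟨y, hxy, hy, hy_ne⟩ := exists_internal_adj_ne hx p.snd
  obtain ⟨z, hz, hzx⟩ := Finset.exists_mem_ne hy x
  rw [mem_neighborFinset] at hz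
  have hp₁ := hT.isPath_cons_of_ne_snd hp hxy.symm hy_ne
  have hp₂ := hT.isPath_cons_of_ne_snd hp₁ hz.symm (by rwa [Walk.snd_cons])
  exact ⟨z, _, hp₂, by simp⟩

theorem exists_isPath_length_add_four (hT : T.IsAcyclic) {p : T.Walk x w} (hp : p.IsPath)
    (hx : 1 < internalDeg T x) (hw : 1 < internalDeg T w) :
    ∃ (y z : V) (r : T.Walk y z), r.IsPath ∧ r.length = p.length + 4 := by
  obtain ⟨y, q, hq, hq_len⟩ := exists_isPath_length_add_two hT hp hx
  obtain ⟨z, r, hr, hr_len⟩ := exists_isPath_length_add_two hT hq.reverse hw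
  exact ⟨z, y, r, hr, by simp [hr_len, hq_len]⟩

theorem exists_isPath_start_one_lt_internalDeg {p : T.Walk x w} (hp : p.IsPath)
    (hx : x ∈ internalSubVerts T) :
    ∃ (x' : V) (q : T.Walk x' w), q.IsPath ∧ 1 < internalDeg T x' ∧
      ∀ e ∈ p.edges, e ∈ internalEdges T → e ∈ q.edges := by
  rcases hx with hx | ⟨hx_leaf, u, hxu, hu⟩
  · exact ⟨x, p, hp, hx, fun e he _ => he⟩
  cases p with
  | nil => exact ⟨u, Walk.cons hxu.symm Walk.nil, by simp [hxu.ne'], hu, by simp⟩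
  | @cons _ v _ hxv q =>
    have hvu : v = u := Finset.card_le_one.mp hx_leaf.le v (by simpa using hxv) u (by simpa)
    subst hvu
    refine ⟨v, q, hp.of_cons, hu, fun e he he_int => ?_⟩
    rcases List.mem_cons.mp he with rfl | he
    · have := he_int.2 x (Sym2.mem_mk_left x v)
      omega
    · exact he

theorem exists_isPath_ends_one_lt_internalDeg {x y : V} {p : T.Walk x y} (hp : p.IsPath)
    (hx : x ∈ internalSubVerts T) (hy : y ∈ internalSubVerts T) :
    ∃ (x' y' : V) (q : T.Walk x' y'), q.IsPath ∧ 1 < internalDeg T x' ∧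
      1 < internalDeg T y' ∧ ∀ e ∈ p.edges, e ∈ internalEdges T → e ∈ q.edges := by
  obtain ⟨x', q, hq, hx', hpq⟩ := exists_isPath_start_one_lt_internalDeg hp hx
  obtain ⟨y', r, hr, hy', hqr⟩ := exists_isPath_start_one_lt_internalDeg hq.reverse hy
  refine ⟨x', y', r.reverse, hr.reverse, hx', hy', fun e he he_int => ?_⟩
  rw [Walk.edges_reverse, List.mem_reverse]
  exact hqr e (by simpa using hpq e he he_int) he_int

end InternalSubgraph

theorem internal_subgraph_paths_have_few_internal_edges_general
    {V : Type} [Fintype V] (T : SimpleGraph V) (hTa : T.IsAcyclic)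
    (d : ℕ) (hd4 : 4 ≤ d) (hdiam : T.diam = d)
    (a b : ↥(internalSubVerts T))
    (p : (T.induce (internalSubVerts T)).Walk a b) (hp : p.IsPath) :
    ((p.edges.map (Sym2.map (Subtype.val))).toFinset.filter
        fun e => e ∈ internalEdges T).card ≤ d - 4 := by
  set P := p.map (SimpleGraph.Embedding.induce (internalSubVerts T)).toHom
  have hP : P.IsPath := hp.map Subtype.val_injective
  have hP_edges : P.edges = p.edges.map (Sym2.map Subtype.val) := p.edges_map _
  obtain ⟨x, y, q, hq, hx, hy, hPq⟩ := exists_isPath_ends_one_lt_internalDeg hP a.2 b.2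
  obtain ⟨u, v, r, hr, hr_len⟩ := exists_isPath_length_add_four hTa hq hx hy
  have hS_le : ((p.edges.map (Sym2.map Subtype.val)).toFinset.filter
      fun e => e ∈ internalEdges T).card ≤ q.length :=
    calc _ ≤ q.edges.toFinset.card := Finset.card_le_card fun e he => by
            rw [Finset.mem_filter, List.mem_toFinset] at he
            exact List.mem_toFinset.mpr (hPq e (hP_edges ▸ he.1) he.2)
      _ ≤ q.edges.length := List.toFinset_card_le _
      _ = q.length := q.length_edges
  have hr_le : r.length ≤ d := by
    rw [hTa.length_eq_dist hr, ← hdiam]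
    exact SimpleGraph.dist_le_diam (SimpleGraph.ediam_ne_top_of_diam_ne_zero (by omega))
  omega

/-- If `T` is a tree of diameter `d ≥ 4`, then every path in the
internal subgraph `𝓘_T` contains at most `d - 4` internal edges of `T`. -/
theorem internal_subgraph_paths_have_few_internal_edges
    {V : Type} [Fintype V] (T : SimpleGraph V) (hTc : T.Connected) (hTa : T.IsAcyclic)
    (d : ℕ) (hd4 : 4 ≤ d) (hdiam : T.diam = d)
    (a b : ↥(internalSubVerts T))
    (p : (T.induce (internalSubVerts T)).Walk a b) (hp : p.IsPath) :
    ((p.edges.map (Sym2.map (Subtype.val))).toFinset.filter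
        fun e => e ∈ internalEdges T).card ≤ d - 4 :=
  internal_subgraph_paths_have_few_internal_edges_general T hTa d hd4 hdiam a b p hp

end

end CSFPaper
end
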